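/- For each a ∈ (0,1), let x^{*,a} be the unique minimizer of L^(a) over X and let ν^{*,a} be the unique vector in its product-form representation. Then, as a → 0+, the Euclidean distance d(x^{*,a}, X*) → 0 and the Euclidean distance d(ν^{*,a}, H*) → 0. -/

import Mathlib

open Finset Filter

/-- The feasible set `X`. -/
def XsetDef {I : Type*} [Fintype I] [DecidableEq I]
    (Kbar : Finset (I → ℕ)) (ρ : I → ℝ) : Set ((I → ℕ) → ℝ) :=
  {x | (∀ k ∈ Kbar.erase 0, 0 ≤ x k) ∧ ∀ i : I, ∑ k ∈ Kbar.erase 0, (k i : ℝ) * x k = ρ i}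

/-- The set `X*` of optimal solutions of (LP). -/
def XstarDef {I : Type*} [Fintype I] [DecidableEq I]
    (Kbar : Finset (I → ℕ)) (ρ : I → ℝ) : Set ((I → ℕ) → ℝ) :=
  {x ∈ XsetDef Kbar ρ |
    ∀ y ∈ XsetDef Kbar ρ, ∑ k ∈ Kbar.erase 0, x k ≤ ∑ k ∈ Kbar.erase 0, y k}

/-- The set `H*` of optimal dual vectors. -/
def HstarDef {I : Type*} [Fintype I] [DecidableEq I]
    (Kbar : Finset (I → ℕ)) (ρ : I → ℝ) : Set (I → ℝ) :=
  {η | (∀ i, 0 ≤ η i) ∧ (∀ k ∈ Kbar.erase 0, ∑ i, (k i : ℝ) * η i ≤ 1) ∧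
    ∃ x ∈ XsetDef Kbar ρ, ∀ k ∈ Kbar.erase 0, ∑ i, (k i : ℝ) * η i < 1 → x k = 0}

/-- `c_k = ∏_i (k_i)!`. -/
noncomputable def confC {I : Type*} [Fintype I] (k : I → ℕ) : ℝ :=
  ∏ i, (Nat.factorial (k i) : ℝ)

/-- The Lyapunov function `L^(a)`. -/
noncomputable def Lfun {I : Type*} [Fintype I] [DecidableEq I]
    (Kbar : Finset (I → ℕ)) (a : ℝ) (x : (I → ℕ) → ℝ) : ℝ :=
  -(1 / Real.log a) *
    ∑ k ∈ Kbar.erase 0, x k * Real.log (x k * confC k / (Real.exp 1 * a))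

/-!
Write `b = -log a`, so `b → ∞` as `a → 0+`. Then `L^(a) x = ∑ x_k + F x / b` with `F` bounded
below on `X`, hence the minimizers are optimal for (LP) up to `O(1/b)`; and the product form
reads `x_k c_k = exp (b (⟨k, ν⟩ - 1))`. As `x_k c_k` is bounded on `X`, this gives
`b (⟨k, ν⟩ - 1) ≤ β` for every `k ∈ K̄`; removing one customer of type `i` from a configuration
(monotonicity of `K̄`) then gives `ρ_i ≤ S_i exp (β + b ν_i)` with `S_i = ∑_k k_i`, so `-b ν_i`
is bounded above. Hence `(x^{*,a}, ν^{*,a})` stays in a compact box, and at any cluster point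
`(x̄, η)` the limit `x̄` is LP-optimal, the two bounds give `η ≥ 0` and `⟨k, η⟩ ≤ 1`, and
`⟨k, η⟩ < 1` forces `x_k c_k = exp (b (⟨k, ν⟩ - 1)) → 0`, which is complementary slackness.
All cluster points thus lie in `X* × H*`, and the distances tend to `0`.
-/

open Topology

section Distance

variable {ι : Type*} {t : Finset ι} {S : Set (ι → ℝ)} {x x' : ι → ℝ}

noncomputable def infDistOn (t : Finset ι) (S : Set (ι → ℝ)) (x : ι → ℝ) : ℝ :=
  sInf {d : ℝ | ∃ y ∈ S, d = Real.sqrt (∑ k ∈ t, (x k - y k) ^ 2)}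

theorem infDistOn_nonneg : 0 ≤ infDistOn t S x :=
  Real.sInf_nonneg (by rintro _ ⟨y, -, rfl⟩; positivity)

theorem infDistOn_le {y : ι → ℝ} (hy : y ∈ S) :
    infDistOn t S x ≤ Real.sqrt (∑ k ∈ t, (x k - y k) ^ 2) :=
  csInf_le ⟨0, by rintro _ ⟨y, -, rfl⟩; positivity⟩ ⟨y, hy, rfl⟩

theorem infDistOn_congr (h : ∀ k ∈ t, x k = x' k) : infDistOn t S x = infDistOn t S x' := by
  have hsum (y : ι → ℝ) : ∑ k ∈ t, (x k - y k) ^ 2 = ∑ k ∈ t, (x' k - y k) ^ 2 :=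
    sum_congr rfl fun k hk => by rw [h k hk]
  simp only [infDistOn, hsum]

theorem tendsto_infDistOn_nhdsSet : Tendsto (infDistOn t S) (𝓝ˢ S) (𝓝 0) := by
  refine tendsto_iff_comap.2 (nhdsSet_le.2 fun p hp => tendsto_iff_comap.1 ?_)
  have hdist : Tendsto (fun x : ι → ℝ => Real.sqrt (∑ k ∈ t, (x k - p k) ^ 2)) (𝓝 p) (𝓝 0) := by
    have hcont : Continuous fun x : ι → ℝ => Real.sqrt (∑ k ∈ t, (x k - p k) ^ 2) := by fun_prop
    simpa using hcont.tendsto p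
  exact squeeze_zero (fun _ => infDistOn_nonneg) (fun _ => infDistOn_le hp) hdist

end Distance

theorem nonpos_of_tendsto_of_mul_le {α : Type*} {l : Filter α} [l.NeBot] {b t : α → ℝ}
    {τ M : ℝ} (hb : Tendsto b l atTop) (ht : Tendsto t l (𝓝 τ))
    (hM : ∀ᶠ a in l, b a * t a ≤ M) : τ ≤ 0 := by
  by_contra! hτ
  obtain ⟨a, hle, hgt⟩ := (hM.and ((hb.atTop_mul_pos hτ ht).eventually_gt_atTop M)).exists
  exact hle.not_gt hgt

theorem le_abs_of_one_le_of_mul_le {b t M : ℝ} (hb : 1 ≤ b) (h : b * t ≤ M) : t ≤ |M| := by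
  rcases le_or_gt t 0 with ht | ht
  · exact ht.trans (abs_nonneg M)
  · nlinarith [le_abs_self M]

theorem neg_one_le_mul_log_mul_sub {t c : ℝ} (ht : 0 ≤ t) (hc : 1 ≤ c) :
    -1 ≤ t * Real.log (t * c) - t := by
  rcases ht.eq_or_lt with rfl | ht
  · simp
  have hlog := Real.one_sub_inv_le_log_of_pos (mul_pos ht (one_pos.trans_le hc))
  have hinv : c⁻¹ ≤ 1 := inv_le_one_of_one_le₀ hc
  have hmul : t * (1 - (t * c)⁻¹) = t - c⁻¹ := by field_simp
  nlinarith [mul_le_mul_of_nonneg_left hlog ht.le]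

section Entropy

variable {I : Type*} [Fintype I]

theorem one_le_confC (k : I → ℕ) : 1 ≤ confC k :=
  Finset.one_le_prod fun i _ => by exact_mod_cast (k i).factorial_pos

theorem confC_pos (k : I → ℕ) : 0 < confC k :=
  one_pos.trans_le (one_le_confC k)

noncomputable def entropyTerm (Kbar : Finset (I → ℕ)) (x : (I → ℕ) → ℝ) : ℝ :=
  ∑ k ∈ Kbar.erase 0, (x k * Real.log (x k * confC k) - x k)

theorem neg_card_le_entropyTerm {Kbar : Finset (I → ℕ)} {x : (I → ℕ) → ℝ}
    (hx : ∀ k ∈ Kbar.erase 0, 0 ≤ x k) :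
    -((Kbar.erase 0).card : ℝ) ≤ entropyTerm Kbar x := by
  have h := card_nsmul_le_sum _ _ _ fun k hk =>
    neg_one_le_mul_log_mul_sub (hx k hk) (one_le_confC k)
  rwa [nsmul_eq_mul, mul_neg_one] at h

end Entropy

section PackingLP

variable {I : Type*} [Fintype I] [DecidableEq I] {Kbar : Finset (I → ℕ)} {ρ : I → ℝ}
  {x : (I → ℕ) → ℝ} {k : I → ℕ}

theorem nonneg_of_mem_XsetDef (hx : x ∈ XsetDef Kbar ρ) (i : I) : 0 ≤ ρ i :=
  hx.2 i ▸ sum_nonneg fun k hk => mul_nonneg (Nat.cast_nonneg _) (hx.1 k hk)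

theorem le_sum_of_mem_XsetDef (hx : x ∈ XsetDef Kbar ρ) (hk : k ∈ Kbar.erase 0) :
    x k ≤ ∑ i, ρ i := by
  obtain ⟨i, hi⟩ : ∃ i, k i ≠ 0 := by
    by_contra! h
    exact ne_of_mem_erase hk (funext h)
  calc x k ≤ k i * x k :=
        le_mul_of_one_le_left (hx.1 k hk) (by exact_mod_cast Nat.one_le_iff_ne_zero.2 hi)
    _ ≤ ∑ k' ∈ Kbar.erase 0, (k' i : ℝ) * x k' :=
        single_le_sum (f := fun k' => (k' i : ℝ) * x k')
          (fun k' hk' => mul_nonneg (Nat.cast_nonneg _) (hx.1 k' hk')) hk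
    _ = ρ i := hx.2 i
    _ ≤ ∑ i, ρ i := single_le_sum (fun j _ => nonneg_of_mem_XsetDef hx j) (mem_univ i)

theorem Lfun_eq_sum_add_entropyTerm_div {a : ℝ} (ha₀ : 0 < a) (ha₁ : a ≠ 1) :
    Lfun Kbar a x = ∑ k ∈ Kbar.erase 0, x k + entropyTerm Kbar x / -Real.log a := by
  have hlog : Real.log a ≠ 0 := Real.log_ne_zero_of_pos_of_ne_one ha₀ ha₁
  have hterm (k : I → ℕ) : x k * Real.log (x k * confC k / (Real.exp 1 * a)) =
      (x k * Real.log (x k * confC k) - x k) - x k * Real.log a := by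
    rcases eq_or_ne (x k) 0 with h | h
    · simp [h]
    rw [Real.log_div (mul_ne_zero h (confC_pos k).ne') (by positivity),
      Real.log_mul (Real.exp_pos 1).ne' ha₀.ne', Real.log_exp]
    ring
  simp only [Lfun, entropyTerm, hterm, sum_sub_distrib, ← sum_mul]
  field_simp
  ring

theorem sum_le_sum_add_div_of_isMinOn {a : ℝ} (ha : a ∈ Set.Ioo 0 1)
    (hx : x ∈ XsetDef Kbar ρ) (hmin : IsMinOn (Lfun Kbar a) (XsetDef Kbar ρ) x)
    {y : (I → ℕ) → ℝ} (hy : y ∈ XsetDef Kbar ρ) :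
    ∑ k ∈ Kbar.erase 0, x k ≤
      ∑ k ∈ Kbar.erase 0, y k + (entropyTerm Kbar y + (Kbar.erase 0).card) / -Real.log a := by
  have hb : 0 < -Real.log a := neg_pos.2 (Real.log_neg ha.1 ha.2)
  have hL := isMinOn_iff.1 hmin y hy
  rw [Lfun_eq_sum_add_entropyTerm_div ha.1 ha.2.ne, Lfun_eq_sum_add_entropyTerm_div ha.1 ha.2.ne]
    at hL
  have hF : entropyTerm Kbar y - entropyTerm Kbar x ≤
      entropyTerm Kbar y + (Kbar.erase 0).card := by
    linarith [neg_card_le_entropyTerm hx.1]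
  calc ∑ k ∈ Kbar.erase 0, x k
      ≤ ∑ k ∈ Kbar.erase 0, y k + (entropyTerm Kbar y - entropyTerm Kbar x) / -Real.log a := by
        rw [sub_div]; linarith
    _ ≤ _ := by gcongr

/-- With `b = -log a`, this is the product form `x_k = (a / c_k) exp (b ∑ i, k_i ν_i)`. -/
structure IsProductForm (Kbar : Finset (I → ℕ)) (ρ : I → ℝ) (b : ℝ) (x : (I → ℕ) → ℝ)
    (ν : I → ℝ) : Prop where
  mem : x ∈ XsetDef Kbar ρ
  mul_confC_eq : ∀ k ∈ Kbar.erase 0, x k * confC k = Real.exp (b * (∑ i, (k i : ℝ) * ν i - 1))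

theorem isProductForm_neg_log {a : ℝ} (ha : 0 < a) {ν : I → ℝ} (hx : x ∈ XsetDef Kbar ρ)
    (hprod : ∀ k ∈ Kbar.erase 0,
      x k = (a / confC k) * Real.exp ((-Real.log a) * ∑ i, (k i : ℝ) * ν i)) :
    IsProductForm Kbar ρ (-Real.log a) x ν := by
  refine ⟨hx, fun k hk => ?_⟩
  rw [hprod k hk, mul_sub, mul_one, Real.exp_sub, Real.exp_neg, Real.exp_log ha]
  field_simp [(confC_pos k).ne']

/-- The constant `β`: a bound for `x_k c_k` on `X`, uniform in `k`. -/
noncomputable def dualBound (Kbar : Finset (I → ℕ)) (ρ : I → ℝ) : ℝ :=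
  (∑ i, ρ i) * ∑ k ∈ Kbar.erase 0, confC k

namespace IsProductForm

variable {b : ℝ} {ν : I → ℝ}

theorem mul_sub_one_le (h : IsProductForm Kbar ρ b x ν) (hb : 0 ≤ b) (hk : k ∈ Kbar) :
    b * (∑ i, (k i : ℝ) * ν i - 1) ≤ dualBound Kbar ρ := by
  have hρ : 0 ≤ ∑ i, ρ i := sum_nonneg fun i _ => nonneg_of_mem_XsetDef h.mem i
  have hβ : 0 ≤ dualBound Kbar ρ := mul_nonneg hρ (sum_nonneg fun k _ => (confC_pos k).le)
  by_cases hk0 : k = 0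
  · subst hk0
    simp only [Pi.zero_apply, Nat.cast_zero, zero_mul, sum_const_zero, zero_sub]
    linarith
  have hk' : k ∈ Kbar.erase 0 := mem_erase.2 ⟨hk0, hk⟩
  rw [← Real.exp_le_exp, ← h.mul_confC_eq k hk']
  calc x k * confC k ≤ (∑ i, ρ i) * confC k :=
        mul_le_mul_of_nonneg_right (le_sum_of_mem_XsetDef h.mem hk') (confC_pos k).le
    _ ≤ dualBound Kbar ρ :=
        mul_le_mul_of_nonneg_left (single_le_sum (fun k _ => (confC_pos k).le) hk') hρ
    _ ≤ Real.exp (dualBound Kbar ρ) := by linarith [Real.add_one_le_exp (dualBound Kbar ρ)]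

/-- Removing one customer of type `i` from `k` stays in `K̄`, so `mul_sub_one_le` for the smaller
configuration bounds `x_k` by `exp (β + b ν_i)`. -/
theorem mul_neg_le (h : IsProductForm Kbar ρ b x ν) (hb : 0 ≤ b)
    (hmono : ∀ k ∈ Kbar, ∀ k' : I → ℕ, (∀ i, k' i ≤ k i) → k' ∈ Kbar) {i : I} (hρ : 0 < ρ i) :
    b * -ν i ≤ dualBound Kbar ρ - Real.log (ρ i / ∑ k ∈ Kbar.erase 0, (k i : ℝ)) := by
  have hterm : ∀ k ∈ Kbar.erase 0,
      (k i : ℝ) * x k ≤ k i * Real.exp (dualBound Kbar ρ + b * ν i) := by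
    intro k hk
    rcases Nat.eq_zero_or_pos (k i) with hki | hki
    · simp [hki]
    gcongr
    have hle : Pi.single i 1 ≤ k := fun j => by
      rcases eq_or_ne j i with rfl | hj
      · simpa [Nat.one_le_iff_ne_zero, pos_iff_ne_zero] using hki
      · simp [hj]
    obtain ⟨k', rfl⟩ : ∃ k', k = k' + Pi.single i 1 :=
      ⟨k - Pi.single i 1, (tsub_add_cancel_of_le hle).symm⟩
    have hk' : k' ∈ Kbar := hmono _ (mem_of_mem_erase hk) k' fun j => Nat.le_add_right _ _
    have hsplit : ∑ j, ((k' + Pi.single i 1 : I → ℕ) j : ℝ) * ν j =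
        ∑ j, (k' j : ℝ) * ν j + ν i := by
      simp [Pi.single_apply, add_mul, sum_add_distrib]
    calc x (k' + Pi.single i 1) ≤ x (k' + Pi.single i 1) * confC (k' + Pi.single i 1) :=
          le_mul_of_one_le_right (h.mem.1 _ hk) (one_le_confC _)
      _ = Real.exp (b * (∑ j, (k' j : ℝ) * ν j - 1) + b * ν i) := by
          rw [h.mul_confC_eq _ hk, hsplit]; ring_nf
      _ ≤ Real.exp (dualBound Kbar ρ + b * ν i) := by
          gcongr; exact h.mul_sub_one_le hb hk'
  have hρle : ρ i ≤ (∑ k ∈ Kbar.erase 0, (k i : ℝ)) * Real.exp (dualBound Kbar ρ + b * ν i) := by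
    rw [← h.mem.2 i, sum_mul]
    exact sum_le_sum hterm
  have hS : 0 < ∑ k ∈ Kbar.erase 0, (k i : ℝ) :=
    pos_of_mul_pos_left (hρ.trans_le hρle) (Real.exp_pos _).le
  have hlog := (Real.log_le_iff_le_exp (div_pos hρ hS)).2 ((div_le_iff₀' hS).2 hρle)
  linarith

end IsProductForm

end PackingLP

section Asymptotics

variable {I : Type*} [Fintype I] [DecidableEq I] {Kbar : Finset (I → ℕ)} {ρ : I → ℝ}
  {α : Type*} {l : Filter α} {b : α → ℝ} {x : α → (I → ℕ) → ℝ} {ν : α → I → ℝ}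
  {xlim : (I → ℕ) → ℝ} {η : I → ℝ}

theorem mem_XsetDef_of_tendsto [l.NeBot] (hX : ∀ᶠ a in l, x a ∈ XsetDef Kbar ρ)
    (hx : ∀ k ∈ Kbar.erase 0, Tendsto (fun a => x a k) l (𝓝 (xlim k))) : xlim ∈ XsetDef Kbar ρ :=
  ⟨fun k hk => ge_of_tendsto (hx k hk) (hX.mono fun _ ha => ha.1 k hk),
    fun i => tendsto_nhds_unique (tendsto_finsetSum _ fun k hk => (hx k hk).const_mul _)
      (tendsto_const_nhds.congr' (hX.mono fun _ ha => (ha.2 i).symm))⟩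

theorem mem_XstarDef_of_tendsto [l.NeBot] (hb : Tendsto b l atTop)
    (hX : ∀ᶠ a in l, x a ∈ XsetDef Kbar ρ)
    (hopt : ∀ y ∈ XsetDef Kbar ρ, ∃ C, ∀ᶠ a in l,
      ∑ k ∈ Kbar.erase 0, x a k ≤ ∑ k ∈ Kbar.erase 0, y k + C / b a)
    (hx : ∀ k ∈ Kbar.erase 0, Tendsto (fun a => x a k) l (𝓝 (xlim k))) :
    xlim ∈ XstarDef Kbar ρ := by
  refine ⟨mem_XsetDef_of_tendsto hX hx, fun y hy => ?_⟩
  obtain ⟨C, hC⟩ := hopt y hy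
  have hbound : Tendsto (fun a => ∑ k ∈ Kbar.erase 0, y k + C / b a) l
      (𝓝 (∑ k ∈ Kbar.erase 0, y k)) := by
    simpa using tendsto_const_nhds.add (tendsto_const_nhds.div_atTop hb)
  exact le_of_tendsto_of_tendsto (tendsto_finsetSum _ hx) hbound hC

theorem mem_HstarDef_of_tendsto [l.NeBot] (hρ : ∀ i, 0 < ρ i)
    (hmono : ∀ k ∈ Kbar, ∀ k' : I → ℕ, (∀ i, k' i ≤ k i) → k' ∈ Kbar)
    (hb : Tendsto b l atTop) (hform : ∀ᶠ a in l, IsProductForm Kbar ρ (b a) (x a) (ν a))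
    (hxlim : xlim ∈ XsetDef Kbar ρ)
    (hx : ∀ k ∈ Kbar.erase 0, Tendsto (fun a => x a k) l (𝓝 (xlim k)))
    (hν : ∀ i, Tendsto (fun a => ν a i) l (𝓝 (η i))) : η ∈ HstarDef Kbar ρ := by
  have hform' : ∀ᶠ a in l, IsProductForm Kbar ρ (b a) (x a) (ν a) ∧ 0 ≤ b a :=
    hform.and (hb.eventually_ge_atTop 0)
  have hpair (k : I → ℕ) :
      Tendsto (fun a => ∑ i, (k i : ℝ) * ν a i) l (𝓝 (∑ i, (k i : ℝ) * η i)) :=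
    tendsto_finsetSum _ fun i _ => (hν i).const_mul _
  refine ⟨fun i => ?_, fun k hk => ?_, xlim, hxlim, fun k hk hlt => ?_⟩
  · exact neg_nonpos.1 <| nonpos_of_tendsto_of_mul_le hb (hν i).neg <|
      hform'.mono fun a ha => ha.1.mul_neg_le ha.2 hmono (hρ i)
  · exact sub_nonpos.1 <| nonpos_of_tendsto_of_mul_le hb ((hpair k).sub_const 1) <|
      hform'.mono fun a ha => ha.1.mul_sub_one_le ha.2 (mem_of_mem_erase hk)
  · have hexp := hb.atTop_mul_neg (sub_neg.2 hlt) ((hpair k).sub_const 1)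
    have hzero : Tendsto (fun a => x a k * confC k) l (𝓝 0) :=
      (Real.tendsto_exp_atBot.comp hexp).congr'
        (hform.mono fun a ha => (ha.mul_confC_eq k hk).symm)
    have hxk := tendsto_nhds_unique ((hx k hk).mul_const (confC k)) hzero
    exact (mul_eq_zero.1 hxk).resolve_right (confC_pos k).ne'

theorem mem_XstarDef_prod_HstarDef_of_mapClusterPt (hρ : ∀ i, 0 < ρ i)
    (hmono : ∀ k ∈ Kbar, ∀ k' : I → ℕ, (∀ i, k' i ≤ k i) → k' ∈ Kbar)
    (hb : Tendsto b l atTop) (hform : ∀ᶠ a in l, IsProductForm Kbar ρ (b a) (x a) (ν a))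
    (hopt : ∀ y ∈ XsetDef Kbar ρ, ∃ C, ∀ᶠ a in l,
      ∑ k ∈ Kbar.erase 0, x a k ≤ ∑ k ∈ Kbar.erase 0, y k + C / b a)
    {p : ((I → ℕ) → ℝ) × (I → ℝ)}
    (hp : MapClusterPt p l fun a => ((Kbar.erase 0).piecewise (x a) 0, ν a)) :
    p ∈ XstarDef Kbar ρ ×ˢ HstarDef Kbar ρ := by
  obtain ⟨U, hU, hUp⟩ := mapClusterPt_iff_ultrafilter.1 hp
  have hx (k) (hk : k ∈ Kbar.erase 0) : Tendsto (fun a => x a k) U (𝓝 (p.1 k)) :=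
    (tendsto_pi_nhds.1 hUp.fst_nhds k).congr fun a => piecewise_eq_of_mem _ _ _ hk
  have hX : ∀ᶠ a in U, x a ∈ XsetDef Kbar ρ := (hform.filter_mono hU).mono fun _ ha => ha.mem
  have hxlim := mem_XstarDef_of_tendsto (hb.mono_left hU) hX
    (fun y hy => (hopt y hy).imp fun _ hC => hC.filter_mono hU) hx
  exact ⟨hxlim, mem_HstarDef_of_tendsto hρ hmono (hb.mono_left hU) (hform.filter_mono hU)
    hxlim.1 hx (tendsto_pi_nhds.1 hUp.snd_nhds)⟩

theorem exists_isCompact_eventually_mem (hρ : ∀ i, 0 < ρ i)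
    (hunit : ∀ i : I, Pi.single i 1 ∈ Kbar)
    (hmono : ∀ k ∈ Kbar, ∀ k' : I → ℕ, (∀ i, k' i ≤ k i) → k' ∈ Kbar)
    (hform : ∀ᶠ a in l, IsProductForm Kbar ρ (b a) (x a) (ν a)) (hb : ∀ᶠ a in l, 1 ≤ b a) :
    ∃ K : Set (((I → ℕ) → ℝ) × (I → ℝ)), IsCompact K ∧
      ∀ᶠ a in l, ((Kbar.erase 0).piecewise (x a) 0, ν a) ∈ K := by
  set γ : I → ℝ := fun i => |dualBound Kbar ρ - Real.log (ρ i / ∑ k ∈ Kbar.erase 0, (k i : ℝ))|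
  refine ⟨Set.Icc 0 (fun _ => ∑ i, ρ i) ×ˢ Set.Icc (-γ) (fun _ => 1 + |dualBound Kbar ρ|),
    isCompact_Icc.prod isCompact_Icc, ?_⟩
  filter_upwards [hform, hb] with a ha hba
  have hb0 : 0 ≤ b a := zero_le_one.trans hba
  have hx (k : I → ℕ) : (Kbar.erase 0).piecewise (x a) 0 k ∈ Set.Icc 0 (∑ i, ρ i) := by
    by_cases hk : k ∈ Kbar.erase 0
    · rw [piecewise_eq_of_mem _ _ _ hk]
      exact ⟨ha.mem.1 k hk, le_sum_of_mem_XsetDef ha.mem hk⟩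
    · rw [piecewise_eq_of_notMem _ _ _ hk]
      exact ⟨le_rfl, sum_nonneg fun i _ => nonneg_of_mem_XsetDef ha.mem i⟩
  have hν (i : I) : ν a i ∈ Set.Icc (-γ i) (1 + |dualBound Kbar ρ|) := by
    have hup := le_abs_of_one_le_of_mul_le hba (ha.mul_sub_one_le hb0 (hunit i))
    simp only [Pi.single_apply, Nat.cast_ite, Nat.cast_one, Nat.cast_zero, ite_mul, one_mul,
      zero_mul, sum_ite_eq', mem_univ, if_true] at hup
    exact ⟨neg_le.1 (le_abs_of_one_le_of_mul_le hba (ha.mul_neg_le hb0 hmono (hρ i))),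
      by linarith⟩
  exact ⟨⟨fun k => (hx k).1, fun k => (hx k).2⟩, fun i => (hν i).1, fun i => (hν i).2⟩

end Asymptotics

theorem minimizer_tendsto_opt_general
    {I : Type*} [Fintype I] [DecidableEq I]
    (Kbar : Finset (I → ℕ))
    (hunit : ∀ i : I, Pi.single i 1 ∈ Kbar)
    (hmono : ∀ k ∈ Kbar, ∀ k' : I → ℕ, (∀ i, k' i ≤ k i) → k' ∈ Kbar)
    (ρ : I → ℝ) (hρ : ∀ i, 0 < ρ i)
    (xs : ℝ → (I → ℕ) → ℝ) (νs : ℝ → I → ℝ)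
    (hmin : ∀ a ∈ Set.Ioo (0 : ℝ) 1, xs a ∈ XsetDef Kbar ρ ∧
      ∀ y ∈ XsetDef Kbar ρ, Lfun Kbar a (xs a) ≤ Lfun Kbar a y)
    (hprod : ∀ a ∈ Set.Ioo (0 : ℝ) 1, ∀ k ∈ Kbar.erase 0,
      xs a k = (a / confC k) * Real.exp ((-Real.log a) * ∑ i, (k i : ℝ) * νs a i)) :
    Tendsto (fun a : ℝ =>
        sInf {d : ℝ | ∃ y ∈ XstarDef Kbar ρ,
          d = Real.sqrt (∑ k ∈ Kbar.erase 0, (xs a k - y k) ^ 2)})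
      (nhdsWithin 0 (Set.Ioi 0)) (nhds 0) ∧
    Tendsto (fun a : ℝ =>
        sInf {d : ℝ | ∃ η ∈ HstarDef Kbar ρ,
          d = Real.sqrt (∑ i, (νs a i - η i) ^ 2)})
      (nhdsWithin 0 (Set.Ioi 0)) (nhds 0) := by
  have hb : Tendsto (fun a => -Real.log a) (𝓝[>] 0) atTop :=
    tendsto_neg_atBot_atTop.comp Real.tendsto_log_nhdsGT_zero
  have hI : ∀ᶠ a in 𝓝[>] (0 : ℝ), a ∈ Set.Ioo 0 1 := Ioo_mem_nhdsGT one_pos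
  have hform : ∀ᶠ a in 𝓝[>] 0, IsProductForm Kbar ρ (-Real.log a) (xs a) (νs a) :=
    hI.mono fun a ha => isProductForm_neg_log ha.1 (hmin a ha).1 (hprod a ha)
  have hopt (y) (hy : y ∈ XsetDef Kbar ρ) : ∃ C, ∀ᶠ a in 𝓝[>] 0,
      ∑ k ∈ Kbar.erase 0, xs a k ≤ ∑ k ∈ Kbar.erase 0, y k + C / -Real.log a :=
    ⟨_, hI.mono fun a ha =>
      sum_le_sum_add_div_of_isMinOn ha (hmin a ha).1 (isMinOn_iff.2 (hmin a ha).2) hy⟩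
  obtain ⟨K, hK, hu⟩ :=
    exists_isCompact_eventually_mem hρ hunit hmono hform (hb.eventually_ge_atTop 1)
  have hlim := hK.tendsto_nhdsSet_of_mapClusterPt hu fun p _ hp =>
    mem_XstarDef_prod_HstarDef_of_mapClusterPt hρ hmono hb hform hopt hp
  refine ⟨?_, tendsto_infDistOn_nhdsSet.comp ((continuous_snd.tendsto_nhdsSet
    fun p hp => hp.2).comp hlim)⟩
  refine (tendsto_infDistOn_nhdsSet.comp ((continuous_fst.tendsto_nhdsSet
    fun p hp => hp.1).comp hlim)).congr fun a => infDistOn_congr fun k hk => ?_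
  exact piecewise_eq_of_mem _ _ _ hk

/-- Theorem: convergence of `x^{*,a}` to `X*` and `ν^{*,a}` to `H*` as `a → 0+`,
in Euclidean distance. -/
theorem minimizer_tendsto_opt
    {I : Type*} [Fintype I] [DecidableEq I] [Nonempty I]
    (Kbar : Finset (I → ℕ))
    (h0 : (0 : I → ℕ) ∈ Kbar)
    (hunit : ∀ i : I, Pi.single i 1 ∈ Kbar)
    (hmono : ∀ k ∈ Kbar, ∀ k' : I → ℕ, (∀ i, k' i ≤ k i) → k' ∈ Kbar)
    (ρ : I → ℝ) (hρ : ∀ i, 0 < ρ i)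
    (xs : ℝ → (I → ℕ) → ℝ) (νs : ℝ → I → ℝ)
    (hmin : ∀ a ∈ Set.Ioo (0 : ℝ) 1, xs a ∈ XsetDef Kbar ρ ∧
      ∀ y ∈ XsetDef Kbar ρ, Lfun Kbar a (xs a) ≤ Lfun Kbar a y)
    (hprod : ∀ a ∈ Set.Ioo (0 : ℝ) 1, ∀ k ∈ Kbar.erase 0,
      xs a k = (a / confC k) * Real.exp ((-Real.log a) * ∑ i, (k i : ℝ) * νs a i)) :
    Tendsto (fun a : ℝ =>
        sInf {d : ℝ | ∃ y ∈ XstarDef Kbar ρ,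
          d = Real.sqrt (∑ k ∈ Kbar.erase 0, (xs a k - y k) ^ 2)})
      (nhdsWithin 0 (Set.Ioi 0)) (nhds 0) ∧
    Tendsto (fun a : ℝ =>
        sInf {d : ℝ | ∃ η ∈ HstarDef Kbar ρ,
          d = Real.sqrt (∑ i, (νs a i - η i) ^ 2)})
      (nhdsWithin 0 (Set.Ioi 0)) (nhds 0) :=
  minimizer_tendsto_opt_general Kbar hunit hmono ρ hρ xs νs hmin hprod
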